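/- Let T ⊆ ℕ* be a finitely branching rooted tree in which every node has at least two successors, and let S ⊆ T be a subtree without leaves that is level-wise uniformly branching. Let r > 0, let n ∈ ℕ, and let F ⊆ S be a finite prefix-free set of strings, each of length at least n, such that every path of S extends some element of F. Then there exists k ≥ n such that Σ_{ρ ∈ F} |T_{|ρ|}|^{-r} ≥ |S_k| · |T_k|^{-r}. -/

import Mathlib

/-!
Let `K` be the largest length in `F`. Every node of `S_K` lies on a path of `S`, hence extends
some `ρ ∈ F`; by uniform branching exactly `|S_K| / |S_{|ρ|}|` nodes of `S_K` extend a given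
`ρ ∈ S`, so the covering gives the Kraft-type inequality `∑_{ρ ∈ F} 1 / |S_{|ρ|}| ≥ 1`.
Writing `|T_{|ρ|}|^{-r} = g(ρ) / |S_{|ρ|}|` with `g(ρ) = |S_{|ρ|}| ⬝ |T_{|ρ|}|^{-r}`, the sum is
therefore at least `min_{ρ ∈ F} g(ρ)`, and `k = |ρ|` for a minimiser `ρ` works.
-/

open Filter MeasureTheory

namespace FractalTree

/-- The `n`-th level of a tree `T ⊆ ℕ*`: the strings in `T` of length `n`. -/
def level (T : Set (List ℕ)) (n : ℕ) : Set (List ℕ) := {σ | σ ∈ T ∧ σ.length = n}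

/-- A tree is a nonempty set of finite sequences closed under initial segments. -/
def IsTree (T : Set (List ℕ)) : Prop :=
  T.Nonempty ∧ ∀ σ ∈ T, ∀ τ : List ℕ, τ <+: σ → τ ∈ T

/-- The immediate successors of a node `σ` in `T`. -/
def succs (T : Set (List ℕ)) (σ : List ℕ) : Set ℕ := {a | σ ++ [a] ∈ T}

/-- Every node of `T` has finitely many immediate successors. -/
def FinBranching (T : Set (List ℕ)) : Prop := ∀ σ ∈ T, (succs T σ).Finite

/-- Every node of `T` has at least two immediate successors. -/
def AtLeastTwo (T : Set (List ℕ)) : Prop :=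
  ∀ σ ∈ T, ∃ a b : ℕ, a ≠ b ∧ a ∈ succs T σ ∧ b ∈ succs T σ

/-- Every node of `S` has at least one immediate successor (no leaves). -/
def NoLeaves (S : Set (List ℕ)) : Prop := ∀ σ ∈ S, ∃ a : ℕ, a ∈ succs S σ

/-- `S` is level-wise uniformly branching: the number of immediate successors of a node
only depends on its level. -/
def UnifBranching (S : Set (List ℕ)) : Prop :=
  ∀ n : ℕ, ∀ σ ∈ level S n, ∀ τ ∈ level S n, (succs S σ).ncard = (succs S τ).ncard

/-- The initial segment of length `n` of an infinite sequence `f`. -/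
def seg (f : ℕ → ℕ) (n : ℕ) : List ℕ := (List.range n).map f

/-- The set `[T]` of infinite paths through `T`. -/
def paths (T : Set (List ℕ)) : Set (ℕ → ℕ) := {f | ∀ n : ℕ, seg f n ∈ T}

open Classical in
/-- The ultrametric on `[T]`: `d(f,g) = 1/|T_n|` where `n` is the least index with
`f n ≠ g n`, and `d(f,f) = 0`. -/
noncomputable def treeDist (T : Set (List ℕ)) (f g : ℕ → ℕ) : ℝ :=
  if h : ∃ n, f n ≠ g n then 1 / ((level T (Nat.find h)).ncard : ℝ) else 0

def descendants (S : Set (List ℕ)) (K : ℕ) (σ : List ℕ) : Set (List ℕ) :=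
  {τ | τ ∈ level S K ∧ σ <+: τ}

lemma FinBranching.mono {S T : Set (List ℕ)} (hT : FinBranching T) (hST : S ⊆ T) :
    FinBranching S :=
  fun σ hσ => (hT σ (hST hσ)).subset fun _ ha => hST ha

section Descendants

variable {S : Set (List ℕ)}

lemma IsTree.nil_mem (hS : IsTree S) : [] ∈ S := by
  obtain ⟨⟨σ, hσ⟩, hclosed⟩ := hS
  exact hclosed σ hσ [] List.nil_prefix

lemma level_eq_descendants_nil (K : ℕ) : level S K = descendants S K [] := by
  ext τ
  simp [descendants]

lemma descendants_subset_level (K : ℕ) (σ : List ℕ) : descendants S K σ ⊆ level S K :=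
  fun _ hτ => hτ.1

lemma descendants_length_self {σ : List ℕ} (hσ : σ ∈ S) : descendants S σ.length σ = {σ} := by
  ext τ
  constructor
  · rintro ⟨⟨-, hτ⟩, hστ⟩
    exact (hστ.eq_of_length hτ.symm).symm
  · rintro rfl
    exact ⟨⟨hσ, rfl⟩, List.prefix_refl _⟩

lemma IsTree.descendants_succ (hS : IsTree S) {σ : List ℕ} {K : ℕ} (hK : σ.length ≤ K) :
    descendants S (K + 1) σ = ⋃ τ ∈ descendants S K σ, (fun a => τ ++ [a]) '' succs S τ := by
  ext υ
  simp only [Set.mem_iUnion, Set.mem_image, exists_prop]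
  constructor
  · rintro ⟨⟨hυ, hlen⟩, hσυ⟩
    have hne : υ ≠ [] := by rintro rfl; simp at hlen
    have hυ' : υ.dropLast ++ [υ.getLast hne] = υ := List.dropLast_append_getLast hne
    have hdrop : υ.dropLast.length = K := by simp [hlen]
    refine ⟨υ.dropLast, ⟨⟨hS.2 υ hυ _ υ.dropLast_prefix, hdrop⟩, ?_⟩, υ.getLast hne, ?_, hυ'⟩
    · exact List.prefix_of_prefix_length_le hσυ υ.dropLast_prefix (hdrop ▸ hK)
    · exact (show υ.dropLast ++ [υ.getLast hne] ∈ S from hυ'.symm ▸ hυ)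
  · rintro ⟨τ, ⟨⟨-, hτ⟩, hστ⟩, a, ha, rfl⟩
    exact ⟨⟨ha, by simp [hτ]⟩, hστ.trans (List.prefix_append τ [a])⟩

lemma IsTree.level_finite (hS : IsTree S) (hfin : FinBranching S) (K : ℕ) :
    (level S K).Finite := by
  induction K with
  | zero =>
    exact (Set.finite_singleton []).subset fun τ hτ => List.length_eq_zero_iff.mp hτ.2
  | succ K ih =>
    rw [level_eq_descendants_nil, hS.descendants_succ (Nat.zero_le K), ← level_eq_descendants_nil]
    exact ih.biUnion fun τ hτ => (hfin τ hτ.1).image _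

lemma IsTree.ncard_level_length_pos (hS : IsTree S) (hfin : FinBranching S) {σ : List ℕ}
    (hσ : σ ∈ S) : 0 < (level S σ.length).ncard :=
  (Set.ncard_pos (hS.level_finite hfin _)).mpr ⟨σ, hσ, rfl⟩

lemma IsTree.ncard_descendants_succ (hS : IsTree S) (hfin : FinBranching S) {σ : List ℕ}
    {K c : ℕ} (hK : σ.length ≤ K) (hc : ∀ τ ∈ level S K, (succs S τ).ncard = c) :
    (descendants S (K + 1) σ).ncard = (descendants S K σ).ncard * c := by
  have hD : (descendants S K σ).Finite :=
    (hS.level_finite hfin K).subset (descendants_subset_level K σ)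
  have hdisj : (descendants S K σ).PairwiseDisjoint fun τ => (fun a => τ ++ [a]) '' succs S τ := by
    rintro τ ⟨⟨-, hτ⟩, -⟩ τ' ⟨⟨-, hτ'⟩, -⟩ hne
    refine Set.disjoint_left.mpr ?_
    rintro _ ⟨a, -, rfl⟩ ⟨b, -, hba⟩
    exact hne (List.append_inj hba (hτ'.trans hτ.symm)).1.symm
  have hchildren : ∀ τ ∈ descendants S K σ, ((fun a => τ ++ [a]) '' succs S τ).ncard = c :=
    fun τ hτ => (Set.ncard_image_of_injective _ fun a b h => by simpa using h).trans (hc τ hτ.1)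
  rw [hS.descendants_succ hK, hD.ncard_biUnion (fun τ hτ => (hfin τ hτ.1.1).image _) hdisj,
    finsum_mem_congr rfl hchildren, finsum_mem_eq_finite_toFinset_sum _ hD, Finset.sum_const,
    smul_eq_mul, Set.ncard_eq_toFinset_card _ hD]

lemma UnifBranching.exists_ncard_succs_eq (hSub : UnifBranching S) (K : ℕ) :
    ∃ c, ∀ τ ∈ level S K, (succs S τ).ncard = c := by
  rcases (level S K).eq_empty_or_nonempty with h | ⟨τ₀, hτ₀⟩
  · exact ⟨0, by simp [h]⟩
  · exact ⟨_, fun τ hτ => hSub K τ hτ τ₀ hτ₀⟩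

theorem IsTree.ncard_level_mul_ncard_descendants (hS : IsTree S) (hfin : FinBranching S)
    (hSub : UnifBranching S) {σ : List ℕ} (hσ : σ ∈ S) {K : ℕ} (hK : σ.length ≤ K) :
    (level S σ.length).ncard * (descendants S K σ).ncard = (level S K).ncard := by
  induction K, hK using Nat.le_induction with
  | base => rw [descendants_length_self hσ, Set.ncard_singleton, mul_one]
  | succ K hK ih =>
    obtain ⟨c, hc⟩ := hSub.exists_ncard_succs_eq K
    -- `level S K = descendants S K []` grows by the same factor `c` as `descendants S K σ`
    rw [level_eq_descendants_nil (K + 1), hS.ncard_descendants_succ hfin hK hc,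
      hS.ncard_descendants_succ hfin (Nat.zero_le K) hc, ← level_eq_descendants_nil, ← ih,
      mul_assoc]

end Descendants

lemma seg_prefix_seg (f : ℕ → ℕ) {a b : ℕ} (h : a ≤ b) : seg f a <+: seg f b := by
  have htake : seg f a = (seg f b).take a := by
    rw [seg, seg, ← List.map_take, List.take_range, min_eq_left h]
  exact htake ▸ List.take_prefix a (seg f b)

theorem IsTree.exists_path_extending {S : Set (List ℕ)} (hS : IsTree S) (hSnl : NoLeaves S)
    {σ : List ℕ} (hσ : σ ∈ S) : ∃ f ∈ paths S, seg f σ.length = σ := by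
  classical
  let next : List ℕ → ℕ := fun τ => if h : τ ∈ S then (hSnl τ h).choose else 0
  let chain : ℕ → List ℕ := fun i => Nat.rec σ (fun _ υ => υ ++ [next υ]) i
  have hchain_succ : ∀ i, chain (i + 1) = chain i ++ [next (chain i)] := fun _ => rfl
  have hchain_mem : ∀ i, chain i ∈ S := by
    intro i
    induction i with
    | zero => exact hσ
    | succ i ih =>
      rw [hchain_succ]
      simp only [next, dif_pos ih]
      exact (hSnl (chain i) ih).choose_spec
  have hchain_length : ∀ i, (chain i).length = σ.length + i := by
    intro i
    induction i with
    | zero => rfl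
    | succ i ih => rw [hchain_succ, List.length_append, ih]; rfl
  have hchain_prefix : ∀ i j, i ≤ j → chain i <+: chain j := by
    intro i j hij
    induction j, hij using Nat.le_induction with
    | base => exact List.prefix_refl _
    | succ j _ ih => exact ih.trans (hchain_succ j ▸ List.prefix_append _ _)
  -- entry `j` of `chain i` no longer changes once `i ≥ j + 1`
  let f : ℕ → ℕ := fun j => (chain (j + 1)).getD j 0
  have hseg : ∀ m, seg f m = (chain m).take m := by
    intro m
    apply List.ext_getElem (by simp [seg, hchain_length])
    intro j hj _
    have hjm : j < m := by simpa [seg] using hj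
    have hj1 : j < (chain (j + 1)).length := by rw [hchain_length (j + 1)]; omega
    simp only [seg, List.getElem_map, List.getElem_range, List.getElem_take, f,
      List.getD_eq_getElem _ _ hj1]
    exact (hchain_prefix (j + 1) m hjm).getElem hj1
  refine ⟨f, fun m => hseg m ▸ hS.2 _ (hchain_mem m) _ (List.take_prefix m _), ?_⟩
  rw [hseg]
  exact (List.prefix_iff_eq_take.mp (hchain_prefix 0 σ.length (Nat.zero_le _))).symm

section Cover

variable {S : Set (List ℕ)} {F : Finset (List ℕ)}

lemma biUnion_descendants_eq_level (hS : IsTree S) (hSnl : NoLeaves S)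
    (hFcov : ∀ f ∈ paths S, ∃ ρ ∈ F, seg f ρ.length = ρ) {K : ℕ}
    (hK : ∀ ρ ∈ F, ρ.length ≤ K) : ⋃ ρ ∈ F, descendants S K ρ = level S K := by
  refine (Set.iUnion₂_subset fun ρ _ => descendants_subset_level K ρ).antisymm fun τ hτ => ?_
  obtain ⟨f, hf, hfτ⟩ := hS.exists_path_extending hSnl hτ.1
  obtain ⟨ρ, hρF, hρ⟩ := hFcov f hf
  have hρτ := seg_prefix_seg f (hK ρ hρF)
  rw [hρ, ← hτ.2, hfτ] at hρτ
  exact Set.mem_biUnion hρF ⟨hτ, hρτ⟩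

theorem one_le_sum_inv_ncard_level (hS : IsTree S) (hfin : FinBranching S) (hSnl : NoLeaves S)
    (hSub : UnifBranching S) (hFS : ∀ ρ ∈ F, ρ ∈ S)
    (hFcov : ∀ f ∈ paths S, ∃ ρ ∈ F, seg f ρ.length = ρ) :
    1 ≤ ∑ ρ ∈ F, ((level S ρ.length).ncard : ℝ)⁻¹ := by
  obtain ⟨f, hf, -⟩ := hS.exists_path_extending hSnl hS.nil_mem
  have hlevel_pos : ∀ k, (0 : ℝ) < (level S k).ncard := fun k => by
    simpa [seg] using hS.ncard_level_length_pos hfin (hf k)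
  set K := F.sup List.length
  have hK : ∀ ρ ∈ F, ρ.length ≤ K := fun ρ hρ => Finset.le_sup hρ
  have hdescendants : ∀ ρ ∈ F, ((descendants S K ρ).ncard : ℝ) =
      (level S K).ncard * ((level S ρ.length).ncard : ℝ)⁻¹ := fun ρ hρ => by
    rw [← hS.ncard_level_mul_ncard_descendants hfin hSub (hFS ρ hρ) (hK ρ hρ), Nat.cast_mul,
      mul_comm, inv_mul_cancel_left₀ (hlevel_pos _).ne']
  have hcount : ((level S K).ncard : ℝ) ≤
      (level S K).ncard * ∑ ρ ∈ F, ((level S ρ.length).ncard : ℝ)⁻¹ :=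
    calc ((level S K).ncard : ℝ)
        = (⋃ ρ ∈ F, descendants S K ρ).ncard := by
          rw [biUnion_descendants_eq_level hS hSnl hFcov hK]
      _ ≤ ∑ ρ ∈ F, ((descendants S K ρ).ncard : ℝ) := by
          exact_mod_cast F.set_ncard_biUnion_le _
      _ = _ := by rw [Finset.mul_sum, Finset.sum_congr rfl hdescendants]
  exact le_of_mul_le_mul_left (by simpa using hcount) (hlevel_pos K)

end Cover

theorem _root_.Finset.exists_mul_le_sum_of_one_le_sum_inv {ι : Type*} {F : Finset ι} {m t : ι → ℝ}
    (hm : ∀ i ∈ F, 0 < m i) (ht : ∀ i ∈ F, 0 ≤ t i) (h : 1 ≤ ∑ i ∈ F, (m i)⁻¹) :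
    ∃ i ∈ F, m i * t i ≤ ∑ i ∈ F, t i := by
  have hF : F.Nonempty := Finset.nonempty_of_sum_ne_zero (f := fun i => (m i)⁻¹) (by linarith)
  obtain ⟨i₀, hi₀, hmin⟩ := F.exists_min_image (fun i => m i * t i) hF
  refine ⟨i₀, hi₀, ?_⟩
  calc m i₀ * t i₀
      ≤ m i₀ * t i₀ * ∑ i ∈ F, (m i)⁻¹ :=
        le_mul_of_one_le_right (mul_nonneg (hm i₀ hi₀).le (ht i₀ hi₀)) h
    _ = ∑ i ∈ F, m i₀ * t i₀ * (m i)⁻¹ := Finset.mul_sum _ _ _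
    _ ≤ ∑ i ∈ F, m i * t i * (m i)⁻¹ := Finset.sum_le_sum fun i hi =>
        mul_le_mul_of_nonneg_right (hmin i hi) (inv_nonneg.mpr (hm i hi).le)
    _ = ∑ i ∈ F, t i := Finset.sum_congr rfl fun i hi => by field_simp [(hm i hi).ne']

theorem cost_of_prefixFree_cover_general
    (T S : Set (List ℕ))
    (hTfin : FinBranching T)
    (hST : S ⊆ T) (hS : IsTree S) (hSnl : NoLeaves S) (hSub : UnifBranching S)
    (r : ℝ) (n : ℕ) (F : Finset (List ℕ))
    (hFS : ∀ ρ ∈ F, ρ ∈ S)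
    (hFlen : ∀ ρ ∈ F, n ≤ ρ.length)
    (hFcov : ∀ f ∈ paths S, ∃ ρ ∈ F, seg f ρ.length = ρ) :
    ∃ k : ℕ, n ≤ k ∧
      ((level S k).ncard : ℝ) * ((level T k).ncard : ℝ) ^ (-r) ≤
        ∑ ρ ∈ F, ((level T ρ.length).ncard : ℝ) ^ (-r) := by
  have hfin : FinBranching S := hTfin.mono hST
  obtain ⟨ρ, hρF, hρ⟩ := Finset.exists_mul_le_sum_of_one_le_sum_inv
    (fun ρ hρ => Nat.cast_pos.mpr (hS.ncard_level_length_pos hfin (hFS ρ hρ)))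
    (fun ρ _ => Real.rpow_nonneg (Nat.cast_nonneg _) _)
    (one_le_sum_inv_ncard_level hS hfin hSnl hSub hFS hFcov)
  exact ⟨ρ.length, hFlen ρ hρF, hρ⟩

/-- Let `T, S` be as before, `r > 0`, `n ∈ ℕ`, and let `F ⊆ S` be a finite
prefix-free set of strings, each of length at least `n`, such that every path of `S` extends
some element of `F`.  Then there is `k ≥ n` with
`Σ_{ρ ∈ F} |T_{|ρ|}|^{-r} ≥ |S_k| ⬝ |T_k|^{-r}`. -/
theorem cost_of_prefixFree_cover
    (T S : Set (List ℕ))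
    (hT : IsTree T) (hTfin : FinBranching T) (hT2 : AtLeastTwo T)
    (hST : S ⊆ T) (hS : IsTree S) (hSnl : NoLeaves S) (hSub : UnifBranching S)
    (r : ℝ) (hr : 0 < r) (n : ℕ) (F : Finset (List ℕ))
    (hFS : ∀ ρ ∈ F, ρ ∈ S)
    (hFpf : ∀ ρ ∈ F, ∀ ρ' ∈ F, ρ <+: ρ' → ρ = ρ')
    (hFlen : ∀ ρ ∈ F, n ≤ ρ.length)
    (hFcov : ∀ f ∈ paths S, ∃ ρ ∈ F, seg f ρ.length = ρ) :
    ∃ k : ℕ, n ≤ k ∧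
      ((level S k).ncard : ℝ) * ((level T k).ncard : ℝ) ^ (-r) ≤
        ∑ ρ ∈ F, ((level T ρ.length).ncard : ℝ) ^ (-r) :=
  cost_of_prefixFree_cover_general T S hTfin hST hS hSnl hSub r n F hFS hFlen hFcov

end FractalTree
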